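/- For every bicomplex number ω with j-decomposition ω = a + i b (a, b ∈ 𝔻), the modulus satisfies |ω|_j = sup{ a cos θ + b sin θ : θ ∈ [0, 2π] }, where the supremum is taken in the Dedekind complete Riesz space 𝔻. -/

import Mathlib

/-!
The order on 𝔻 ≅ ℝ × ℝ is the product order, so the supremum is taken componentwise, and the
two components may be maximised by different angles. For a single complex number `z`,
`z.re * cos θ + z.im * sin θ = Re (z e^{-iθ}) ≤ ‖z‖`, with equality at `θ = arg z`.
-/

open Real Set

lemma re_mul_cos_add_im_mul_sin_le_norm (z : ℂ) (θ : ℝ) :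
    z.re * cos θ + z.im * sin θ ≤ ‖z‖ := by
  set w := z * Complex.exp (-θ * Complex.I)
  have hrot : w.re = z.re * cos θ + z.im * sin θ := by
    simp [w, Complex.exp_re, Complex.exp_im, Complex.mul_re, ← Complex.ofReal_neg]
  calc z.re * cos θ + z.im * sin θ = w.re := hrot.symm
    _ ≤ ‖w‖ := Complex.re_le_norm w
    _ = ‖z‖ := by
      rw [norm_mul, ← Complex.ofReal_neg, Complex.norm_exp_ofReal_mul_I, mul_one]

lemma re_mul_cos_arg_add_im_mul_sin_arg (z : ℂ) :
    z.re * cos z.arg + z.im * sin z.arg = ‖z‖ := by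
  nth_rw 1 [← Complex.norm_mul_cos_arg z, ← Complex.norm_mul_sin_arg z]
  linear_combination ‖z‖ * sin_sq_add_cos_sq z.arg

/-- The maximum is attained at the representative of `arg z` in `[a, a + 2π)`. -/
lemma isGreatest_re_mul_cos_add_im_mul_sin (z : ℂ) (a : ℝ) :
    IsGreatest ((fun θ ↦ z.re * cos θ + z.im * sin θ) '' Icc a (a + 2 * π)) ‖z‖ := by
  refine ⟨⟨toIcoMod two_pi_pos a z.arg, Ico_subset_Icc_self (toIcoMod_mem_Ico _ _ _), ?_⟩, ?_⟩
  · dsimp only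
    rw [← Angle.cos_coe, ← Angle.sin_coe, Angle.coe_toIcoMod, Angle.cos_coe, Angle.sin_coe,
      re_mul_cos_arg_add_im_mul_sin_arg]
  · rintro _ ⟨θ, -, rfl⟩
    exact re_mul_cos_add_im_mul_sin_le_norm z θ

/-- For a bicomplex number ω = a + ib (a, b ∈ 𝔻), the hyperbolic modulus
`|ω|_j` is the supremum of `{a cos θ + b sin θ : θ ∈ [0, 2π]}` in the
Dedekind complete Riesz space 𝔻 ≅ ℝ × ℝ. -/
theorem bicomplex_modulus_sup (ω : ℂ × ℂ) :
    IsLUB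
      {z : ℝ × ℝ | ∃ θ ∈ Set.Icc (0 : ℝ) (2 * Real.pi),
        z = (ω.1.re * Real.cos θ + ω.1.im * Real.sin θ,
             ω.2.re * Real.cos θ + ω.2.im * Real.sin θ)}
      (‖ω.1‖, ‖ω.2‖) := by
  refine isLUB_prod.2 ⟨?_, ?_⟩
  · convert (isGreatest_re_mul_cos_add_im_mul_sin ω.1 0).isLUB using 1
    ext x; simp [eq_comm]
  · convert (isGreatest_re_mul_cos_add_im_mul_sin ω.2 0).isLUB using 1
    ext x; simp [eq_comm]
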